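/- If the infimum s* of the homogenized problem is attained and every minimizer (x₀*, x*) has x₀* = 0, and r* = s*, then r* is not attained on S. Furthermore, if for some minimizer (0, x*) there is a sequence (x_{k,0}, x_k) ∈ S̃ with x_{k,0} > 0 converging to (0, x*), then p(x_k/x_{k,0})/q(x_k/x_{k,0}) → r* as k → ∞. -/

import Mathlib

open MvPolynomial Filter

/-!
If `p(x)/q(x) = r*` at a feasible `x`, scale `(1, x)` by the `t > 0` with `q̃(t, t x) = 1`:
by homogeneity this is a feasible point of the homogenized problem with value `r* = s*`,
i.e. a minimizer with `x₀ = t > 0`. For the limit, homogeneity gives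
`p̃(u)/q̃(u) = p(u/u₀)/q(u/u₀)` whenever `u₀ ≠ 0`, and `p̃/q̃` is continuous at a
minimizer, where `q̃ = 1`.
-/

theorem Fin.smul_cons_one_div_eq {K : Type*} [Field K] {n : ℕ} (u : Fin (n + 1) → K)
    (hu : u 0 ≠ 0) : u 0 • (Fin.cons 1 fun i => u i.succ / u 0 : Fin (n + 1) → K) = u := by
  ext i
  refine Fin.cases ?_ (fun j => ?_) i
  · simp
  · simp [mul_div_cancel₀ _ hu]

namespace MvPolynomial.IsHomogeneous

variable {R σ : Type*} [CommSemiring R] {F : MvPolynomial σ R} {d : ℕ}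

theorem eval_smul (hF : F.IsHomogeneous d) (t : R) (x : σ → R) :
    eval (t • x) F = t ^ d * eval x F := by
  rw [eval_eq, eval_eq, Finset.mul_sum]
  refine Finset.sum_congr rfl fun e he => ?_
  have hdeg : ∑ i ∈ e.support, e i = d := by
    simpa [Finsupp.weight_apply, Finsupp.sum] using hF (mem_support_iff.mp he)
  simp only [Pi.smul_apply, smul_eq_mul, mul_pow, Finset.prod_mul_distrib,
    Finset.prod_pow_eq_pow_sum, hdeg]
  ring

theorem eval_eq_eval_zero (hF : F.IsHomogeneous 0) (x : σ → R) : eval x F = eval 0 F := by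
  simpa using (hF.eval_smul 0 x).symm

theorem exists_pos_eval_smul_eq_one {F : MvPolynomial σ ℝ} (hF : F.IsHomogeneous d)
    {y : σ → ℝ} (hy : 0 < eval y F) (hF1 : ∃ z, eval z F = 1) :
    ∃ t : ℝ, 0 < t ∧ eval (t • y) F = 1 := by
  rcases eq_or_ne d 0 with rfl | hd
  · obtain ⟨z, hz⟩ := hF1
    exact ⟨1, one_pos, by rw [one_smul, hF.eval_eq_eval_zero, ← hz, hF.eval_eq_eval_zero z]⟩
  · refine ⟨(eval y F)⁻¹ ^ (d⁻¹ : ℝ), by positivity, ?_⟩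
    rw [hF.eval_smul, Real.rpow_inv_natCast_pow (inv_nonneg.mpr hy.le) hd, inv_mul_cancel₀ hy.ne']

theorem eval_eq_pow_mul_eval_dehomogenize {K : Type*} [Field K]
    {n : ℕ} {P : MvPolynomial (Fin (n + 1)) K} {p : MvPolynomial (Fin n) K}
    (hP : P.IsHomogeneous d) (hP1 : ∀ x, eval (Fin.cons 1 x) P = eval x p)
    {u : Fin (n + 1) → K} (hu : u 0 ≠ 0) :
    eval u P = u 0 ^ d * eval (fun i => u i.succ / u 0) p := by
  conv_lhs => rw [← Fin.smul_cons_one_div_eq u hu]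
  rw [hP.eval_smul, hP1]

end MvPolynomial.IsHomogeneous

theorem not_attained_of_minimizers_at_infinity_general
    (n m₁ m₂ : ℕ)
    (p q : MvPolynomial (Fin n) ℝ)
    (h : Fin m₁ → MvPolynomial (Fin n) ℝ) (g : Fin m₂ → MvPolynomial (Fin n) ℝ)
    (d : ℕ)
    (P Q : MvPolynomial (Fin (n + 1)) ℝ)
    (hP : P.IsHomogeneous d)
    (hP1 : ∀ x : Fin n → ℝ, eval (Fin.cons 1 x) P = eval x p)
    (hQ : Q.IsHomogeneous d)
    (hQ1 : ∀ x : Fin n → ℝ, eval (Fin.cons 1 x) Q = eval x q)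
    (Hh : Fin m₁ → MvPolynomial (Fin (n + 1)) ℝ)
    (Hg : Fin m₂ → MvPolynomial (Fin (n + 1)) ℝ)
    (hHh : ∀ i, (Hh i).IsHomogeneous (h i).totalDegree)
    (hHh1 : ∀ i, ∀ x : Fin n → ℝ, eval (Fin.cons 1 x) (Hh i) = eval x (h i))
    (hHg : ∀ j, (Hg j).IsHomogeneous (g j).totalDegree)
    (hHg1 : ∀ j, ∀ x : Fin n → ℝ, eval (Fin.cons 1 x) (Hg j) = eval x (g j))
    (rfeas : (Fin n → ℝ) → Prop)
    (hrfeas : ∀ x, rfeas x ↔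
      (∀ i, eval x (h i) = 0) ∧ (∀ j, 0 ≤ eval x (g j)) ∧ 0 < eval x q)
    (Stilde : Set (Fin (n + 1) → ℝ))
    (hStilde : Stilde = {xt | (∀ i, eval xt (Hh i) = 0) ∧
      (∀ j, 0 ≤ eval xt (Hg j)) ∧ 0 ≤ xt 0})
    (sfeas : (Fin (n + 1) → ℝ) → Prop)
    (hsfeas : ∀ xt, sfeas xt ↔ xt ∈ Stilde ∧ eval xt Q = 1)
    (ρ : ℝ)
    (hattained : ∃ xt, sfeas xt ∧ eval xt P = ρ)
    (hall0 : ∀ xt, sfeas xt → eval xt P = ρ → xt 0 = 0) :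
    (¬ ∃ x, rfeas x ∧ eval x p / eval x q = ρ) ∧
    (∀ xt : Fin (n + 1) → ℝ, sfeas xt → eval xt P = ρ →
      ∀ u : ℕ → (Fin (n + 1) → ℝ),
        (∀ k, u k ∈ Stilde ∧ 0 < u k 0) →
        Tendsto u atTop (nhds xt) →
        Tendsto (fun k =>
            eval (fun i : Fin n => u k i.succ / u k 0) p /
              eval (fun i : Fin n => u k i.succ / u k 0) q)
          atTop (nhds ρ)) := by
  constructor
  · rintro ⟨x, hx, hval⟩
    obtain ⟨hxh, hxg, hxq⟩ := (hrfeas x).mp hx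
    obtain ⟨xt₀, hxt₀, -⟩ := hattained
    obtain ⟨t, ht, hQt⟩ := hQ.exists_pos_eval_smul_eq_one (y := Fin.cons 1 x)
      (by rwa [hQ1]) ⟨xt₀, ((hsfeas xt₀).mp hxt₀).2⟩
    have hfeas : sfeas (t • Fin.cons 1 x) := by
      rw [hsfeas, hStilde]
      refine ⟨⟨fun i => ?_, fun j => ?_, by simpa using ht.le⟩, hQt⟩
      · rw [(hHh i).eval_smul, hHh1, hxh, mul_zero]
      · rw [(hHg j).eval_smul, hHg1]
        exact mul_nonneg (pow_nonneg ht.le _) (hxg j)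
    have hPt : eval (t • Fin.cons 1 x) P = ρ := by
      rw [hQ.eval_smul, hQ1] at hQt
      rw [hP.eval_smul, hP1, ← hval, eq_div_iff hxq.ne', mul_right_comm, hQt, one_mul]
    simpa [ht.ne'] using hall0 _ hfeas hPt
  · intro xt hxt hPxt u hu hlim
    have hQxt : eval xt Q = 1 := ((hsfeas xt).mp hxt).2
    have hPQ : Tendsto (fun k => eval (u k) P / eval (u k) Q) atTop (nhds ρ) := by
      have := ((continuous_eval P).tendsto xt |>.comp hlim).div
        ((continuous_eval Q).tendsto xt |>.comp hlim) (by simp [hQxt])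
      rwa [hPxt, hQxt, div_one] at this
    refine hPQ.congr fun k => ?_
    have hk : u k 0 ≠ 0 := (hu k).2.ne'
    rw [hP.eval_eq_pow_mul_eval_dehomogenize hP1 hk, hQ.eval_eq_pow_mul_eval_dehomogenize hQ1 hk,
      mul_div_mul_left _ _ (pow_ne_zero d hk)]

/-- if `s*` is attained and every minimizer of the homogenized
problem has `x₀* = 0`, and `r* = s* = ρ`, then `r*` is not attained; moreover,
for any minimizer `(0, x*)` and any sequence in `S̃` with positive first
coordinate converging to it, the rational values `p(x_k/x_{k,0})/q(x_k/x_{k,0})`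
converge to `r*`. -/
theorem not_attained_of_minimizers_at_infinity
    (n m₁ m₂ : ℕ)
    (p q : MvPolynomial (Fin n) ℝ)
    (h : Fin m₁ → MvPolynomial (Fin n) ℝ) (g : Fin m₂ → MvPolynomial (Fin n) ℝ)
    (d : ℕ) (hd : d = max p.totalDegree q.totalDegree)
    (P Q : MvPolynomial (Fin (n + 1)) ℝ)
    (hP : P.IsHomogeneous d)
    (hP1 : ∀ x : Fin n → ℝ, eval (Fin.cons 1 x) P = eval x p)
    (hQ : Q.IsHomogeneous d)
    (hQ1 : ∀ x : Fin n → ℝ, eval (Fin.cons 1 x) Q = eval x q)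
    (Hh : Fin m₁ → MvPolynomial (Fin (n + 1)) ℝ)
    (Hg : Fin m₂ → MvPolynomial (Fin (n + 1)) ℝ)
    (hHh : ∀ i, (Hh i).IsHomogeneous (h i).totalDegree)
    (hHh1 : ∀ i, ∀ x : Fin n → ℝ, eval (Fin.cons 1 x) (Hh i) = eval x (h i))
    (hHg : ∀ j, (Hg j).IsHomogeneous (g j).totalDegree)
    (hHg1 : ∀ j, ∀ x : Fin n → ℝ, eval (Fin.cons 1 x) (Hg j) = eval x (g j))
    (rfeas : (Fin n → ℝ) → Prop)
    (hrfeas : ∀ x, rfeas x ↔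
      (∀ i, eval x (h i) = 0) ∧ (∀ j, 0 ≤ eval x (g j)) ∧ 0 < eval x q)
    (Stilde : Set (Fin (n + 1) → ℝ))
    (hStilde : Stilde = {xt | (∀ i, eval xt (Hh i) = 0) ∧
      (∀ j, 0 ≤ eval xt (Hg j)) ∧ 0 ≤ xt 0})
    (sfeas : (Fin (n + 1) → ℝ) → Prop)
    (hsfeas : ∀ xt, sfeas xt ↔ xt ∈ Stilde ∧ eval xt Q = 1)
    (ρ : ℝ)
    (hr : IsGLB {v : ℝ | ∃ x, rfeas x ∧ v = eval x p / eval x q} ρ)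
    (hs : IsGLB {v : ℝ | ∃ xt, sfeas xt ∧ v = eval xt P} ρ)
    (hattained : ∃ xt, sfeas xt ∧ eval xt P = ρ)
    (hall0 : ∀ xt, sfeas xt → eval xt P = ρ → xt 0 = 0) :
    (¬ ∃ x, rfeas x ∧ eval x p / eval x q = ρ) ∧
    (∀ xt : Fin (n + 1) → ℝ, sfeas xt → eval xt P = ρ →
      ∀ u : ℕ → (Fin (n + 1) → ℝ),
        (∀ k, u k ∈ Stilde ∧ 0 < u k 0) →
        Tendsto u atTop (nhds xt) →
        Tendsto (fun k =>
            eval (fun i : Fin n => u k i.succ / u k 0) p /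
              eval (fun i : Fin n => u k i.succ / u k 0) q)
          atTop (nhds ρ)) :=
  not_attained_of_minimizers_at_infinity_general n m₁ m₂ p q h g d P Q hP hP1 hQ hQ1 Hh Hg hHh hHh1
    hHg hHg1 rfeas hrfeas Stilde hStilde sfeas hsfeas ρ hattained hall0
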